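/- Let the group Z² act on X = {(2^n, 2^m) : n,m ∈ Z} ⊆ R² by (k,l)·(2^n,2^m) = (2^{n+k}, 2^{m+l}), with the restricted Euclidean metric on X. Define Δ_Γ(x,x') = min(d(x,x'), inf{|γ| : γx = x'}). Then Δ_Γ is not coarsely equivalent to the warped metric d_Γ: specifically, for x_n = (2^n, 2^{−n}) and x_n' = (2^{n+1}, 1), we have d_Γ(x_n, x_n') ≤ 2 for all n ≥ 1 while Δ_Γ(x_n, x_n') tends to infinity. -/

import Mathlib

open scoped BigOperators
open Filter

/-- Word length in `ℤ²` with respect to the standard (symmetrised) generators. -/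
noncomputable def zzWordLength (g : ℤ × ℤ) : ℕ :=
  sInf {n : ℕ | ∃ f : Fin n → ℤ × ℤ,
    (∀ i, f i ∈ ({(1, 0), (0, 1), (-1, 0), (0, -1)} : Set (ℤ × ℤ))) ∧ ∑ i, f i = g}

/-- The embedding `(n,m) ↦ (2ⁿ, 2ᵐ) ∈ ℝ²` and the induced Euclidean metric. -/
noncomputable def zzDist (p q : ℤ × ℤ) : ℝ :=
  Real.sqrt (((2 : ℝ) ^ p.1 - (2 : ℝ) ^ q.1) ^ 2 + ((2 : ℝ) ^ p.2 - (2 : ℝ) ^ q.2) ^ 2)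

/-- Chain sums defining the warped metric for the translation action of `ℤ²`. -/
def zzChainSums (x x' : ℤ × ℤ) : Set ℝ :=
  {c | ∃ (N : ℕ) (xs : Fin (N + 1) → ℤ × ℤ) (γs : Fin N → ℤ × ℤ),
    xs 0 = x ∧ xs (Fin.last N) = x' ∧
    c = ∑ i : Fin N, ((zzWordLength (γs i) : ℝ) + zzDist (γs i + xs i.castSucc) (xs i.succ))}

noncomputable def zzWarpDist (x x' : ℤ × ℤ) : ℝ := sInf (zzChainSums x x')

/-- `Δ_Γ(x,x') = min(d(x,x'), inf{|γ| : γ·x = x'})`. -/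
noncomputable def zzDelta (x x' : ℤ × ℤ) : ℝ :=
  min (zzDist x x') (sInf {c : ℝ | ∃ γ : ℤ × ℤ, γ + x = x' ∧ c = (zzWordLength γ : ℝ)})

/-!
A chain may combine a Euclidean step with a group step: from `(2ⁿ, 2⁻ⁿ)` a Euclidean step of
length `< 1` reaches `(2ⁿ, 1)`, and the generator `(1, 0)` then moves it to `(2ⁿ⁺¹, 1)`, so
`d_Γ ≤ 2`. The pseudo-distance `Δ_Γ` allows only one of the two: the Euclidean distance is at
least `2ⁿ`, and the only group element carrying one point to the other is `(1, n)`, whose word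
length is its `ℓ¹`-norm `n + 1`.
-/

section WordLength

local notation "gens" => ({(1, 0), (0, 1), (-1, 0), (0, -1)} : Set (ℤ × ℤ))

lemma natAbs_add_natAbs_sum_le {k : ℕ} (f : Fin k → ℤ × ℤ) (hf : ∀ i, f i ∈ gens) :
    (∑ i, f i).1.natAbs + (∑ i, f i).2.natAbs ≤ k := by
  calc (∑ i, f i).1.natAbs + (∑ i, f i).2.natAbs
      ≤ ∑ i, ((f i).1.natAbs + (f i).2.natAbs) :=
        Finset.le_sum_of_subadditive (fun g : ℤ × ℤ => g.1.natAbs + g.2.natAbs) (by simp)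
          (fun g h => by simp only [Prod.fst_add, Prod.snd_add]; grind [Int.natAbs_add_le]) _ _
    _ = k := by
        rw [Finset.sum_congr rfl fun i _ => ?_, Finset.sum_const, Finset.card_univ,
          Fintype.card_fin, smul_eq_mul, mul_one]
        obtain h | h | h | h : f i = (1, 0) ∨ f i = (0, 1) ∨ f i = (-1, 0) ∨ f i = (0, -1) := hf i
        all_goals simp [h]

lemma exists_word_sum_eq (g : ℤ × ℤ) :
    ∃ f : Fin (g.1.natAbs + g.2.natAbs) → ℤ × ℤ, (∀ i, f i ∈ gens) ∧ ∑ i, f i = g := by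
  refine ⟨Fin.append (fun _ => (g.1.sign, 0)) (fun _ => (0, g.2.sign)), fun i => ?_, ?_⟩
  · refine Fin.addCases (fun j => ?_) (fun j => ?_) i
    · have : g.1 ≠ 0 := Int.natAbs_pos.mp j.pos
      rcases Int.sign_trichotomy g.1 with h | h | h <;> simp_all
    · have : g.2 ≠ 0 := Int.natAbs_pos.mp j.pos
      rcases Int.sign_trichotomy g.2 with h | h | h <;> simp_all
  · simp only [Fin.sum_univ_add, Fin.append_left, Fin.append_right, Finset.sum_const,
      Finset.card_univ, Fintype.card_fin]
    ext <;> simp [mul_comm _ (Int.sign _), Int.sign_mul_abs]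

theorem zzWordLength_eq (g : ℤ × ℤ) : zzWordLength g = g.1.natAbs + g.2.natAbs := by
  obtain ⟨f, hf, hsum⟩ := exists_word_sum_eq g
  refine le_antisymm (Nat.sInf_le ⟨f, hf, hsum⟩) ?_
  have hne : {n : ℕ | ∃ f : Fin n → ℤ × ℤ, (∀ i, f i ∈ gens) ∧ ∑ i, f i = g}.Nonempty :=
    ⟨_, f, hf, hsum⟩
  obtain ⟨f', hf', hsum'⟩ := Nat.sInf_mem hne
  have hlen := natAbs_add_natAbs_sum_le f' hf'
  rwa [hsum'] at hlen

end WordLength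

lemma zzDist_of_fst_eq {p q : ℤ × ℤ} (h : p.1 = q.1) :
    zzDist p q = |(2 : ℝ) ^ p.2 - 2 ^ q.2| := by
  rw [zzDist, h, sub_self, sq, zero_mul, zero_add, Real.sqrt_sq_eq_abs]

lemma abs_sub_zpow_fst_le_zzDist (p q : ℤ × ℤ) : |(2 : ℝ) ^ p.1 - 2 ^ q.1| ≤ zzDist p q := by
  rw [← Real.sqrt_sq_eq_abs]
  exact Real.sqrt_le_sqrt (le_add_of_nonneg_right (sq_nonneg _))

lemma zzWarpDist_le_zzDist_add_zzWordLength (x y γ : ℤ × ℤ) :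
    zzWarpDist x (γ + y) ≤ zzDist x y + zzWordLength γ := by
  have hbdd : BddBelow (zzChainSums x (γ + y)) := by
    refine ⟨0, fun c ⟨N, xs, γs, _, _, hc⟩ => hc ▸ Finset.sum_nonneg fun i _ => ?_⟩
    exact add_nonneg (Nat.cast_nonneg _) (Real.sqrt_nonneg _)
  refine csInf_le hbdd ⟨2, ![x, y, γ + y], ![0, γ], rfl, rfl, ?_⟩
  simp [Fin.sum_univ_two, zzWordLength_eq, zzDist_of_fst_eq, add_comm]

lemma zzDelta_eq (x x' : ℤ × ℤ) : zzDelta x x' = min (zzDist x x') (zzWordLength (x' - x)) := by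
  have hset : {c : ℝ | ∃ γ : ℤ × ℤ, γ + x = x' ∧ c = (zzWordLength γ : ℝ)} =
      {(zzWordLength (x' - x) : ℝ)} := by
    ext c
    constructor
    · rintro ⟨γ, rfl, rfl⟩
      simp
    · rintro rfl
      exact ⟨x' - x, sub_add_cancel x' x, rfl⟩
  rw [zzDelta, hset, csInf_singleton]

lemma zzDist_le_one (n : ℕ) : zzDist ((n : ℤ), -(n : ℤ)) ((n : ℤ), 0) ≤ 1 := by
  have h₀ : (0 : ℝ) < 2 ^ (-(n : ℤ)) := by positivity
  have h₁ : (2 : ℝ) ^ (-(n : ℤ)) ≤ 1 := zpow_le_one_of_nonpos₀ one_le_two (by omega)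
  rw [zzDist_of_fst_eq (p := ((n : ℤ), -(n : ℤ))) (q := ((n : ℤ), 0)) rfl, zpow_zero, abs_le]
  constructor <;> linarith

lemma zzWarpDist_le_two (n : ℕ) : zzWarpDist ((n : ℤ), -(n : ℤ)) ((n : ℤ) + 1, 0) ≤ 2 := by
  have hstep : (((n : ℤ) + 1, 0) : ℤ × ℤ) = ((1 : ℤ), (0 : ℤ)) + ((n : ℤ), 0) := by
    ext <;> simp [add_comm]
  calc zzWarpDist ((n : ℤ), -(n : ℤ)) ((n : ℤ) + 1, 0)
      ≤ zzDist ((n : ℤ), -(n : ℤ)) ((n : ℤ), 0) + zzWordLength ((1 : ℤ), (0 : ℤ)) :=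
        hstep ▸ zzWarpDist_le_zzDist_add_zzWordLength _ _ _
    _ ≤ 1 + 1 := by gcongr <;> simp [zzDist_le_one, zzWordLength_eq]
    _ = 2 := by norm_num

lemma natCast_le_zzDelta (n : ℕ) : (n : ℝ) ≤ zzDelta ((n : ℤ), -(n : ℤ)) ((n : ℤ) + 1, 0) := by
  rw [zzDelta_eq]
  refine le_min ?_ ?_
  · calc (n : ℝ) ≤ 2 ^ n := mod_cast Nat.lt_two_pow_self.le
      _ = |(2 : ℝ) ^ (n : ℤ) - 2 ^ ((n : ℤ) + 1)| := by
          rw [zpow_add_one₀ two_ne_zero, zpow_natCast, show (2 : ℝ) ^ n - 2 ^ n * 2 = -2 ^ n by ring,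
            abs_neg, abs_of_pos (by positivity)]
      _ ≤ _ := abs_sub_zpow_fst_le_zzDist ((n : ℤ), -(n : ℤ)) ((n : ℤ) + 1, 0)
  · simp [zzWordLength_eq]

/-- `Δ_Γ` is not coarsely equivalent to the warped metric: along
`xₙ = (2ⁿ, 2⁻ⁿ)`, `xₙ' = (2ⁿ⁺¹, 1)` the warped distance stays `≤ 2` while `Δ_Γ → ∞`. -/
theorem zz_delta_not_coarsely_equivalent :
    (∀ n : ℕ, 1 ≤ n → zzWarpDist ((n : ℤ), -(n : ℤ)) ((n : ℤ) + 1, 0) ≤ 2) ∧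
    Tendsto (fun n : ℕ => zzDelta ((n : ℤ), -(n : ℤ)) ((n : ℤ) + 1, 0)) atTop atTop :=
  ⟨fun n _ => zzWarpDist_le_two n,
    tendsto_atTop_mono natCast_le_zzDelta tendsto_natCast_atTop_atTop⟩
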